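/- For every integer n ≥ 1, det((s_{i+j})_{1 ≤ i,j ≤ n}) = D_n · (p;q)_{n+1} · √q / ((1−p)·(q;q)_n), where D_n = det((s_{i+j})_{0 ≤ i,j ≤ n}). -/

import Mathlib

/-!
Writing `x = q⁻¹`, the moments factor as
`s_{a+b} = q^{-1/2} w_a w_b · (p;q)_a ∏_{l<b} (x^a - p q^l)` with `w_k = q^{-(k²+2k)/2}`.
Up to row and column scalings, a Hankel matrix `(s_{(i+t)+(j+t)})` is therefore the matrix of
the monic polynomials `∏_{l<j} (X - p q^{t+l})` evaluated at the nodes `x^{i+t}`, whose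
determinant is a Vandermonde determinant. Both determinants of the theorem are of this form
(`t = 1` and `t = 0`) and share the nodes `x, …, xⁿ`, so their quotient only involves
`∏_{j ≤ n} (x^j - 1) = (q;q)_n ∏_{j ≤ n} x^j` and the products of the `(p;q)_a`.
-/

/-- Finite q-shifted factorial `(z;q)_n`. -/
noncomputable def qp (z q : ℝ) (n : ℕ) : ℝ := ∏ k ∈ Finset.range n, (1 - z * q ^ k)

/-- Generalized Stieltjes–Wigert moments `s_n = (p;q)_n q^{-(n+1)²/2}`. -/
noncomputable def sw (p q : ℝ) (n : ℕ) : ℝ := qp p q n * q ^ (-(((n : ℝ) + 1) ^ 2) / 2)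

/-- Hankel determinant `D_n = det (s_{i+j})_{0 ≤ i,j ≤ n}`. -/
noncomputable def hD (p q : ℝ) (n : ℕ) : ℝ :=
  (Matrix.of fun i j : Fin (n + 1) => sw p q ((i : ℕ) + (j : ℕ))).det

open Finset Polynomial

theorem Matrix.det_of_mul_mul_prod_range_sub {R : Type*} [CommRing R] [Nontrivial R] {m : ℕ}
    (a b y : Fin m → R) (c : ℕ → R) :
    (Matrix.of fun i j : Fin m => a i * b j * ∏ l ∈ range j, (y i - c l)).det
      = (∏ i, a i) * (∏ j, b j) * (Matrix.vandermonde y).det := by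
  set P : Fin m → R[X] := fun j => ∏ l ∈ range j, (X - C (c l))
  have hmonic : ∀ j, (P j).Monic := fun j => monic_prod_of_monic _ _ fun l _ => monic_X_sub_C _
  have hdeg : ∀ j, (P j).natDegree = j := fun j => by
    simp [P, natDegree_prod_of_monic _ _ fun l _ => monic_X_sub_C (c l)]
  have hM : (Matrix.of fun i j : Fin m => a i * b j * ∏ l ∈ range j, (y i - c l))
      = Matrix.of fun i j => a i *
          (Matrix.of fun i j => b j * (Matrix.of fun i j => (P j).eval (y i)) i j) i j := by
    ext i j
    simp [P, eval_prod, mul_assoc]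
  rw [hM, Matrix.det_mul_column, Matrix.det_mul_row,
    det_eval_matrixOfPolynomials_eq_det_vandermonde y P hdeg hmonic, mul_assoc]

theorem prod_vandermonde_succ {R : Type*} [CommRing R] {n : ℕ} (v : Fin (n + 1) → R) :
    ∏ i : Fin (n + 1), ∏ j ∈ Ioi i, (v j - v i)
      = (∏ j : Fin n, (v j.succ - v 0)) * ∏ i : Fin n, ∏ j ∈ Ioi i, (v j.succ - v i.succ) := by
  rw [Fin.prod_univ_succ, Fin.prod_Ioi_zero]
  simp_rw [Fin.prod_Ioi_succ]

theorem qp_add (p q : ℝ) (a b : ℕ) :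
    qp p q (a + b) = qp p q a * ∏ l ∈ range b, (1 - p * q ^ (a + l)) :=
  prod_range_add _ a b

theorem qp_zero (p q : ℝ) : qp p q 0 = 1 :=
  prod_range_zero _

theorem qp_succ (p q : ℝ) (n : ℕ) : qp p q (n + 1) = qp p q n * (1 - p * q ^ n) :=
  prod_range_succ _ n

theorem qp_pos {p q : ℝ} (hp : p < 1) (hq0 : 0 ≤ q) (hq1 : q ≤ 1) (n : ℕ) : 0 < qp p q n := by
  refine prod_pos fun k _ => ?_
  have hqk : q ^ k ≤ 1 := pow_le_one₀ hq0 hq1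
  rcases le_or_gt p 0 with hp0 | hp0
  · nlinarith [pow_nonneg hq0 k]
  · nlinarith

noncomputable def swWeight (q : ℝ) (k : ℕ) : ℝ := q ^ (-((k : ℝ) ^ 2 + 2 * k) / 2)

theorem swWeight_zero (q : ℝ) : swWeight q 0 = 1 := by
  simp [swWeight]

theorem rpow_neg_sq_succ_add_div_two {q : ℝ} (hq : 0 < q) (a b : ℕ) :
    q ^ (-(((a + b : ℕ) : ℝ) + 1) ^ 2 / 2)
      = (√q)⁻¹ * swWeight q a * swWeight q b * q⁻¹ ^ (a * b) := by
  have hexp : -(((a + b : ℕ) : ℝ) + 1) ^ 2 / 2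
      = -(1 / 2) + -((a : ℝ) ^ 2 + 2 * a) / 2 + -((b : ℝ) ^ 2 + 2 * b) / 2 + -((a * b : ℕ) : ℝ) := by
    push_cast; ring
  rw [hexp, Real.rpow_add hq, Real.rpow_add hq, Real.rpow_add hq, Real.rpow_neg hq.le,
    Real.rpow_neg hq.le, Real.rpow_natCast, Real.sqrt_eq_rpow, swWeight, swWeight, inv_pow]

theorem sw_add {q : ℝ} (p : ℝ) (hq : 0 < q) (a b : ℕ) :
    sw p q (a + b) = (√q)⁻¹ * swWeight q a * swWeight q b
      * (qp p q a * ∏ l ∈ range b, (q⁻¹ ^ a - p * q ^ l)) := by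
  have hnode : ∀ l, (1 - p * q ^ (a + l)) * q⁻¹ ^ a = q⁻¹ ^ a - p * q ^ l := fun l => by
    rw [pow_add, inv_pow]; field_simp
  have hprod : (∏ l ∈ range b, (1 - p * q ^ (a + l))) * (q⁻¹ ^ a) ^ b
      = ∏ l ∈ range b, (q⁻¹ ^ a - p * q ^ l) := by
    calc (∏ l ∈ range b, (1 - p * q ^ (a + l))) * (q⁻¹ ^ a) ^ b
        = ∏ l ∈ range b, (1 - p * q ^ (a + l)) * q⁻¹ ^ a := by
          rw [prod_mul_distrib, prod_const, card_range]
      _ = _ := prod_congr rfl fun l _ => hnode l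
  rw [sw, rpow_neg_sq_succ_add_div_two hq, qp_add, pow_mul, ← hprod]
  ring

theorem det_sw_shift {q : ℝ} (p : ℝ) (hq : 0 < q) (t m : ℕ) :
    (Matrix.of fun i j : Fin m => sw p q (((i : ℕ) + t) + ((j : ℕ) + t))).det
      = ((√q)⁻¹) ^ m * (∏ i : Fin m, swWeight q (i + t)) ^ 2
        * (∏ i : Fin m, qp p q (i + t) * ∏ l ∈ range t, (q⁻¹ ^ ((i : ℕ) + t) - p * q ^ l))
        * ∏ i : Fin m, ∏ j ∈ Ioi i, (q⁻¹ ^ ((j : ℕ) + t) - q⁻¹ ^ ((i : ℕ) + t)) := by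
  have hentry : ∀ i j : Fin m, sw p q (((i : ℕ) + t) + ((j : ℕ) + t))
      = ((√q)⁻¹ * swWeight q (i + t)
          * (qp p q (i + t) * ∏ l ∈ range t, (q⁻¹ ^ ((i : ℕ) + t) - p * q ^ l)))
        * swWeight q (j + t) * ∏ l ∈ range j, (q⁻¹ ^ ((i : ℕ) + t) - p * q ^ (t + l)) :=
    fun i j => by
      rw [sw_add p hq, add_comm (j : ℕ) t, prod_range_add]
      ring
  simp_rw [hentry]
  rw [Matrix.det_of_mul_mul_prod_range_sub, Matrix.det_vandermonde]
  simp only [prod_mul_distrib, prod_const, card_univ, Fintype.card_fin]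
  ring

theorem det_sw_shift_one {q : ℝ} (p : ℝ) (hq : 0 < q) (n : ℕ) :
    (Matrix.of fun i j : Fin n => sw p q (((i : ℕ) + 1) + ((j : ℕ) + 1))).det
      = ((√q)⁻¹) ^ n * (∏ i : Fin n, swWeight q (i + 1)) ^ 2
        * ((∏ i : Fin n, qp p q (i + 2)) * ∏ i : Fin n, q⁻¹ ^ ((i : ℕ) + 1))
        * ∏ i : Fin n, ∏ j ∈ Ioi i, (q⁻¹ ^ ((j : ℕ) + 1) - q⁻¹ ^ ((i : ℕ) + 1)) := by
  have hrow : ∀ k : ℕ, qp p q (k + 1) * ∏ l ∈ range 1, (q⁻¹ ^ (k + 1) - p * q ^ l)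
      = qp p q (k + 2) * q⁻¹ ^ (k + 1) := fun k => by
    have hx : q ^ (k + 1) * q⁻¹ ^ (k + 1) = 1 := by
      rw [← mul_pow, mul_inv_cancel₀ hq.ne', one_pow]
    rw [prod_range_one, qp_succ p q (k + 1), pow_zero, mul_one]
    linear_combination qp p q (k + 1) * p * hx
  rw [det_sw_shift p hq, ← prod_mul_distrib]
  simp_rw [hrow]

theorem hD_eq_prod {q : ℝ} (p : ℝ) (hq : 0 < q) (n : ℕ) :
    hD p q n
      = ((√q)⁻¹) ^ (n + 1) * (∏ i : Fin n, swWeight q (i + 1)) ^ 2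
        * (∏ i : Fin (n + 1), qp p q i) * (qp q q n * ∏ i : Fin n, q⁻¹ ^ ((i : ℕ) + 1))
        * ∏ i : Fin n, ∏ j ∈ Ioi i, (q⁻¹ ^ ((j : ℕ) + 1) - q⁻¹ ^ ((i : ℕ) + 1)) := by
  have h := det_sw_shift p hq 0 (n + 1)
  simp only [add_zero, range_zero, prod_empty, mul_one] at h
  have hnode : ∀ k : ℕ, q⁻¹ ^ (k + 1) - q⁻¹ ^ 0 = (1 - q * q ^ k) * q⁻¹ ^ (k + 1) := fun k => by
    rw [pow_zero, ← pow_succ', sub_mul, one_mul, inv_pow, mul_inv_cancel₀ (pow_ne_zero _ hq.ne')]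
  have hqq : ∏ i : Fin n, (1 - q * q ^ (i : ℕ)) = qp q q n :=
    Fin.prod_univ_eq_prod_range (fun k => 1 - q * q ^ k) n
  rw [hD, h, prod_vandermonde_succ, Fin.prod_univ_succ (fun i => swWeight q i)]
  simp only [Fin.val_succ, Fin.val_zero, swWeight_zero, one_mul, hnode, prod_mul_distrib, hqq]
  ring

theorem prod_qp_mul_qp_succ (p q : ℝ) (n : ℕ) :
    (∏ i : Fin (n + 1), qp p q i) * qp p q (n + 1) = (1 - p) * ∏ i : Fin n, qp p q (i + 2) := by
  rw [Fin.prod_univ_eq_prod_range (qp p q), Fin.prod_univ_eq_prod_range (fun i => qp p q (i + 2)),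
    ← prod_range_succ, prod_range_succ', prod_range_succ']
  rw [zero_add, qp_succ p q 0, qp_zero]
  ring

theorem stmt_7_general (p q : ℝ) (hp1 : p < 1) (hq0 : 0 < q) (hq1 : q < 1) (n : ℕ) :
    (Matrix.of fun i j : Fin n => sw p q (((i : ℕ) + 1) + ((j : ℕ) + 1))).det
      = hD p q n * qp p q (n + 1) * Real.sqrt q / ((1 - p) * qp q q n) := by
  have hp : 1 - p ≠ 0 := by linarith
  have hqq : qp q q n ≠ 0 := (qp_pos hq1 hq0.le hq1.le n).ne'
  have hsq : √q ≠ 0 := (Real.sqrt_pos.2 hq0).ne'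
  rw [det_sw_shift_one p hq0, hD_eq_prod p hq0, eq_div_iff (mul_ne_zero hp hqq)]
  set W := ∏ i : Fin n, swWeight q (i + 1)
  set X := ∏ i : Fin n, q⁻¹ ^ ((i : ℕ) + 1)
  set V := ∏ i : Fin n, ∏ j ∈ Ioi i, (q⁻¹ ^ ((j : ℕ) + 1) - q⁻¹ ^ ((i : ℕ) + 1))
  linear_combination (√q)⁻¹ ^ n * W ^ 2 * qp q q n * X * V
    * ((prod_qp_mul_qp_succ p q n).symm
      - (∏ i : Fin (n + 1), qp p q i) * qp p q (n + 1) * mul_inv_cancel₀ hsq)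

theorem stmt_7 (p q : ℝ) (hp0 : 0 ≤ p) (hp1 : p < 1) (hq0 : 0 < q) (hq1 : q < 1)
    (n : ℕ) (hn : 1 ≤ n) :
    (Matrix.of fun i j : Fin n => sw p q (((i : ℕ) + 1) + ((j : ℕ) + 1))).det
      = hD p q n * qp p q (n + 1) * Real.sqrt q / ((1 - p) * qp q q n) :=
  stmt_7_general p q hp1 hq0 hq1 n
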